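/- For symmetric positive definite matrices V and Σ of the same size and a matrix X̃ of full column rank, define Ω(V,Σ) = (X̃^T V^{-1} X̃)^{-1} (X̃^T V^{-1} Σ V^{-1} X̃) (X̃^T V^{-1} X̃)^{-1}. Then Ω(V,Σ) ⪰ Ω(Σ,Σ) = (X̃^T Σ^{-1} X̃)^{-1} in the Loewner order, i.e., Ω(V,Σ) - (X̃^T Σ^{-1} X̃)^{-1} is positive semidefinite. -/

import Mathlib

/-!
Write `G := V⁻¹ X̃ (X̃ᵀ V⁻¹ X̃)⁻¹`; then `Ω(V,Σ) = Gᵀ Σ G` and `Gᵀ X̃ = 1`, so `G` is a left inverse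
of `X̃`. This is the Gauss–Markov situation: for the generalized least squares weight
`H := Σ⁻¹ X̃ (X̃ᵀ Σ⁻¹ X̃)⁻¹` and any left inverse `G` one has `Gᵀ Σ H = Hᵀ Σ H = (X̃ᵀ Σ⁻¹ X̃)⁻¹`,
hence `Gᵀ Σ G = Hᵀ Σ H + (G - H)ᵀ Σ (G - H)`, and the last term is positive semidefinite.
-/

open Matrix
open scoped ComplexOrder

namespace Matrix

theorem conjTranspose_mul_mul_sub_eq_of_orthogonal {m n R : Type*} [Fintype n] [Ring R]
    [StarRing R] (S : Matrix n n R) (G H : Matrix n m R)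
    (hGH : Gᴴ * S * H = Hᴴ * S * H) (hHG : Hᴴ * S * G = Hᴴ * S * H) :
    Gᴴ * S * G - Hᴴ * S * H = (G - H)ᴴ * S * (G - H) := by
  rw [conjTranspose_sub, Matrix.sub_mul, Matrix.sub_mul, Matrix.mul_sub, Matrix.mul_sub, hGH, hHG]
  abel

variable {m n 𝕜 : Type*} [Fintype m] [Fintype n] [DecidableEq m] [DecidableEq n] [RCLike 𝕜]

/-- `(glsWeight S X)ᴴ * y` is the generalized least squares estimate for covariance `S`. -/
noncomputable def glsWeight (S : Matrix n n 𝕜) (X : Matrix n m 𝕜) : Matrix n m 𝕜 :=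
  S⁻¹ * X * (Xᴴ * S⁻¹ * X)⁻¹

theorem conjTranspose_glsWeight {S : Matrix n n 𝕜} (hS : S.IsHermitian) (X : Matrix n m 𝕜) :
    (glsWeight S X)ᴴ = (Xᴴ * S⁻¹ * X)⁻¹ * Xᴴ * S⁻¹ := by
  have hB : (Xᴴ * S⁻¹ * X).IsHermitian := isHermitian_conjTranspose_mul_mul X hS.inv
  rw [glsWeight, conjTranspose_mul, conjTranspose_mul, hB.inv.eq, hS.inv.eq,
    ← Matrix.mul_assoc]

theorem conjTranspose_glsWeight_mul {S : Matrix n n 𝕜} (hS : S.PosDef) {X : Matrix n m 𝕜}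
    (hX : Function.Injective X.mulVec) : (glsWeight S X)ᴴ * X = 1 := by
  rw [conjTranspose_glsWeight hS.isHermitian, Matrix.mul_assoc, Matrix.mul_assoc,
    ← Matrix.mul_assoc Xᴴ, nonsing_inv_mul _
    ((isUnit_iff_isUnit_det _).1 (hS.inv.conjTranspose_mul_mul_same hX).isUnit)]

theorem conjTranspose_mul_mul_glsWeight {S : Matrix n n 𝕜} (hS : S.PosDef) {X G : Matrix n m 𝕜}
    (hG : Gᴴ * X = 1) : Gᴴ * S * glsWeight S X = (Xᴴ * S⁻¹ * X)⁻¹ := by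
  rw [glsWeight, Matrix.mul_assoc, Matrix.mul_assoc, ← Matrix.mul_assoc S,
    mul_nonsing_inv _ ((isUnit_iff_isUnit_det _).1 hS.isUnit), Matrix.one_mul,
    ← Matrix.mul_assoc, hG, Matrix.one_mul]

theorem conjTranspose_glsWeight_mul_mul_glsWeight {W : Matrix n n 𝕜} (hW : W.IsHermitian)
    (S : Matrix n n 𝕜) (X : Matrix n m 𝕜) :
    (glsWeight W X)ᴴ * S * glsWeight W X =
      (Xᴴ * W⁻¹ * X)⁻¹ * (Xᴴ * W⁻¹ * S * W⁻¹ * X) * (Xᴴ * W⁻¹ * X)⁻¹ := by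
  rw [conjTranspose_glsWeight hW, glsWeight]
  simp only [Matrix.mul_assoc]

theorem PosDef.posSemidef_conjTranspose_mul_mul_sub_inv {S : Matrix n n 𝕜} (hS : S.PosDef)
    {X G : Matrix n m 𝕜} (hX : Function.Injective X.mulVec) (hG : Gᴴ * X = 1) :
    (Gᴴ * S * G - (Xᴴ * S⁻¹ * X)⁻¹).PosSemidef := by
  set H := glsWeight S X
  have hGH := conjTranspose_mul_mul_glsWeight hS hG
  have hHH := conjTranspose_mul_mul_glsWeight hS (conjTranspose_glsWeight_mul hS hX)
  have hB : (Xᴴ * S⁻¹ * X)⁻¹.IsHermitian :=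
    (hS.inv.conjTranspose_mul_mul_same hX).isHermitian.inv
  have hHG : Hᴴ * S * G = Hᴴ * S * H :=
    calc Hᴴ * S * G = (Gᴴ * S * H)ᴴ := by
          rw [conjTranspose_mul, conjTranspose_mul, conjTranspose_conjTranspose,
            hS.isHermitian.eq, Matrix.mul_assoc]
      _ = Hᴴ * S * H := by rw [hGH, hB.eq, hHH]
  rw [← hHH, conjTranspose_mul_mul_sub_eq_of_orthogonal S G H (hGH.trans hHH.symm) hHG]
  exact hS.posSemidef.conjTranspose_mul_mul_same _

end Matrix

/-- The sandwich covariance `Ω(V,Σ)` is minimized in the Loewner order at `V = Σ`,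
where it equals `(X̃ᵀ Σ⁻¹ X̃)⁻¹`. -/
theorem sandwich_covariance_optimality
    {N d : ℕ}
    (Xt : Matrix (Fin N) (Fin d) ℝ)
    (hrank : ∀ v : Fin d → ℝ, Xt.mulVec v = 0 → v = 0)
    (V Sg : Matrix (Fin N) (Fin N) ℝ)
    (hV : V.PosDef) (hSg : Sg.PosDef)
    (Ω : Matrix (Fin N) (Fin N) ℝ → Matrix (Fin N) (Fin N) ℝ → Matrix (Fin d) (Fin d) ℝ)
    (hΩ : ∀ W S, Ω W S = (Xtᵀ * W⁻¹ * Xt)⁻¹ * (Xtᵀ * W⁻¹ * S * W⁻¹ * Xt) *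
      (Xtᵀ * W⁻¹ * Xt)⁻¹) :
    Ω Sg Sg = (Xtᵀ * Sg⁻¹ * Xt)⁻¹ ∧
      (Ω V Sg - (Xtᵀ * Sg⁻¹ * Xt)⁻¹).PosSemidef := by
  have hX : Function.Injective Xt.mulVec := (injective_iff_map_eq_zero (mulVecLin Xt)).2 hrank
  have hΩ_gls : ∀ {W}, W.PosDef → ∀ S, Ω W S = (glsWeight W Xt)ᴴ * S * glsWeight W Xt := by
    intro W hW S
    rw [hΩ, conjTranspose_glsWeight_mul_mul_glsWeight hW.isHermitian,
      conjTranspose_eq_transpose_of_trivial]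
  rw [← conjTranspose_eq_transpose_of_trivial, hΩ_gls hSg, hΩ_gls hV]
  exact ⟨conjTranspose_mul_mul_glsWeight hSg (conjTranspose_glsWeight_mul hSg hX),
    hSg.posSemidef_conjTranspose_mul_mul_sub_inv hX (conjTranspose_glsWeight_mul hV hX)⟩
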